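/- arXiv:2309.02770 — 2 statements merged into one kernel-verified Lean document; each statement's English description precedes it below -/
import Mathlib

section
/- Let (Σ, μ) be a measure space, let a, b, f : Σ → ℝ be measurable with a(x) > 0 for μ-a.e. x, and suppose that the functions x ↦ a(x)·cosh(f(x)) − b(x)·f(x) and x ↦ √(a(x)² + b(x)²) − b(x)·arsinh(b(x)/a(x)) are both μ-integrable. Then ∫ (a·cosh(f) − b·f) dμ ≥ ∫ (√(a² + b²) − b·arsinh(b/a)) dμ, with equality if and only if f(x) = arsinh(b(x)/a(x)) for μ-a.e. x. -/
/-!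
`cosh` is strictly convex, so it lies strictly above its tangent line at `t₀ = arsinh (b / a)`
except at `t₀`. Multiplying by `a > 0` and using `a sinh t₀ = b`, `a cosh t₀ = √(a² + b²)` gives
`a cosh t - b t ≥ √(a² + b²) - b t₀` with equality only at `t = t₀`. Integrating this a.e.
inequality gives the bound, and between integrable functions an a.e. inequality is an equality
of integrals iff it is an a.e. equality.
-/

open Real MeasureTheory Set

theorem StrictConvexOn.add_mul_sub_lt_of_hasDerivAt {S : Set ℝ} {f : ℝ → ℝ} {x y f' : ℝ}
    (hf : StrictConvexOn ℝ S f) (hx : x ∈ S) (hy : y ∈ S) (hyx : y ≠ x)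
    (hf' : HasDerivAt f f' x) : f x + f' * (y - x) < f y := by
  rcases hyx.lt_or_gt with hlt | hlt
  · have := hf.slope_lt_of_hasDerivAt hy hx hlt hf'
    rw [slope_def_field, div_lt_iff₀ (sub_pos.2 hlt)] at this
    linarith
  · have := hf.lt_slope_of_hasDerivAt hx hy hlt hf'
    rw [slope_def_field, lt_div_iff₀ (sub_pos.2 hlt)] at this
    linarith

theorem Real.strictConvexOn_cosh : StrictConvexOn ℝ univ cosh :=
  StrictMono.strictConvexOn_univ_of_deriv continuous_cosh (deriv_cosh ▸ sinh_strictMono)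

theorem Real.mul_cosh_arsinh_div {a : ℝ} (b : ℝ) (ha : 0 < a) :
    a * cosh (arsinh (b / a)) = √(a ^ 2 + b ^ 2) := by
  rw [cosh_arsinh, ← sqrt_sq ha.le, ← sqrt_mul (sq_nonneg a), sqrt_sq ha.le]
  congr 1
  field_simp

theorem Real.sqrt_sub_mul_arsinh_lt {a t : ℝ} (b : ℝ) (ha : 0 < a) (ht : t ≠ arsinh (b / a)) :
    √(a ^ 2 + b ^ 2) - b * arsinh (b / a) < a * cosh t - b * t := by
  have hsinh : a * sinh (arsinh (b / a)) = b := by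
    rw [sinh_arsinh]
    field_simp
  calc √(a ^ 2 + b ^ 2) - b * arsinh (b / a)
      = a * (cosh (arsinh (b / a)) + sinh (arsinh (b / a)) * (t - arsinh (b / a))) - b * t := by
        rw [mul_add, ← mul_assoc, hsinh, mul_cosh_arsinh_div b ha]
        ring
    _ < a * cosh t - b * t := by
        gcongr
        exact strictConvexOn_cosh.add_mul_sub_lt_of_hasDerivAt (mem_univ _) (mem_univ t) ht
          (hasDerivAt_cosh _)

theorem Real.sqrt_sub_mul_arsinh_le {a : ℝ} (b t : ℝ) (ha : 0 < a) :
    √(a ^ 2 + b ^ 2) - b * arsinh (b / a) ≤ a * cosh t - b * t := by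
  rcases eq_or_ne t (arsinh (b / a)) with rfl | ht
  · rw [mul_cosh_arsinh_div b ha]
  · exact (sqrt_sub_mul_arsinh_lt b ha ht).le

theorem Real.sqrt_sub_mul_arsinh_eq_iff {a : ℝ} (b t : ℝ) (ha : 0 < a) :
    √(a ^ 2 + b ^ 2) - b * arsinh (b / a) = a * cosh t - b * t ↔ t = arsinh (b / a) := by
  refine ⟨fun h ↦ by_contra fun ht ↦ (sqrt_sub_mul_arsinh_lt b ha ht).ne h, ?_⟩
  rintro rfl
  rw [mul_cosh_arsinh_div b ha]

theorem integral_a_cosh_sub_b_mul_ge_general {S : Type*} [MeasurableSpace S]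
    (μ : Measure S) (a b f : S → ℝ)
    (ha_pos : ∀ᵐ x ∂μ, 0 < a x)
    (hint₁ : Integrable (fun x => a x * Real.cosh (f x) - b x * f x) μ)
    (hint₂ : Integrable (fun x =>
      Real.sqrt ((a x) ^ 2 + (b x) ^ 2) - b x * Real.arsinh (b x / a x)) μ) :
    (∫ x, (Real.sqrt ((a x) ^ 2 + (b x) ^ 2)
        - b x * Real.arsinh (b x / a x)) ∂μ) ≤
      (∫ x, (a x * Real.cosh (f x) - b x * f x) ∂μ) ∧
    ((∫ x, (a x * Real.cosh (f x) - b x * f x) ∂μ) =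
        (∫ x, (Real.sqrt ((a x) ^ 2 + (b x) ^ 2)
          - b x * Real.arsinh (b x / a x)) ∂μ) ↔
      ∀ᵐ x ∂μ, f x = Real.arsinh (b x / a x)) := by
  have hle : ∀ᵐ x ∂μ, √(a x ^ 2 + b x ^ 2) - b x * arsinh (b x / a x)
      ≤ a x * cosh (f x) - b x * f x := by
    filter_upwards [ha_pos] with x hx
    exact sqrt_sub_mul_arsinh_le (b x) (f x) hx
  refine ⟨integral_mono_ae hint₂ hint₁ hle, ?_⟩
  rw [eq_comm, integral_eq_iff_of_ae_le hint₂ hint₁ hle]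
  refine Filter.eventually_congr ?_
  filter_upwards [ha_pos] with x hx
  exact sqrt_sub_mul_arsinh_eq_iff (b x) (f x) hx

/-- Integral form of the optimal-frame minimization (Lemma 2.4): for
measurable `a, b, f` with `a > 0` a.e. and both integrands integrable,
`∫ (a cosh f - b f) dμ ≥ ∫ (√(a² + b²) - b arsinh(b/a)) dμ`, with equality
iff `f = arsinh (b / a)` almost everywhere. -/
theorem integral_a_cosh_sub_b_mul_ge {S : Type*} [MeasurableSpace S]
    (μ : Measure S) (a b f : S → ℝ)
    (ha_meas : Measurable a) (hb_meas : Measurable b) (hf_meas : Measurable f)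
    (ha_pos : ∀ᵐ x ∂μ, 0 < a x)
    (hint₁ : Integrable (fun x => a x * Real.cosh (f x) - b x * f x) μ)
    (hint₂ : Integrable (fun x =>
      Real.sqrt ((a x) ^ 2 + (b x) ^ 2) - b x * Real.arsinh (b x / a x)) μ) :
    (∫ x, (Real.sqrt ((a x) ^ 2 + (b x) ^ 2)
        - b x * Real.arsinh (b x / a x)) ∂μ) ≤
      (∫ x, (a x * Real.cosh (f x) - b x * f x) ∂μ) ∧
    ((∫ x, (a x * Real.cosh (f x) - b x * f x) ∂μ) =
        (∫ x, (Real.sqrt ((a x) ^ 2 + (b x) ^ 2)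
          - b x * Real.arsinh (b x / a x)) ∂μ) ↔
      ∀ᵐ x ∂μ, f x = Real.arsinh (b x / a x)) :=
  integral_a_cosh_sub_b_mul_ge_general μ a b f ha_pos hint₁ hint₂
end

section
/- Let Ω ⊆ ℝⁿ be an open connected set, let u, v : Ω → ℝ be twice continuously differentiable, and let k be a continuous map from Ω to real n×n matrices such that D²u(x) = −‖Du(x)‖·k(x) and D²v(x) = −‖Dv(x)‖·k(x) for all x ∈ Ω. If c > 0 and Du(x₁) = c·Dv(x₁) at some point x₁ ∈ Ω, then Du(x) = c·Dv(x) for every x ∈ Ω. -/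
/-! The difference `G = Du - c • Dv` has derivative `(c‖Dv‖ - ‖Du‖) • k`, and for `c ≥ 0` the
reverse triangle inequality gives `|c‖Dv‖ - ‖Du‖| ≤ ‖G‖`, so `‖DG‖ ≤ ‖k‖ ‖G‖`. On a ball where `k`
is bounded, Grönwall's inequality along segments from the centre shows that `G` vanishes on the
whole ball as soon as it vanishes at the centre. Hence the set of points near which `G` vanishes
identically is open, relatively closed in the connected set `Ω`, and contains `x₁`. -/

open Set Metric Filter Topology

section

variable {E F : Type*} [NormedAddCommGroup E] [NormedSpace ℝ E]
  [NormedAddCommGroup F] [NormedSpace ℝ F]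

theorem norm_smul_sub_norm_smul_le {V : Type*} [NormedAddCommGroup V] [NormedSpace ℝ V]
    {c : ℝ} (hc : 0 ≤ c) (a b : F) (K : V) : ‖(c * ‖b‖ - ‖a‖) • K‖ ≤ ‖a - c • b‖ * ‖K‖ := by
  rw [norm_smul, Real.norm_eq_abs]
  gcongr
  calc |c * ‖b‖ - ‖a‖| = |‖c • b‖ - ‖a‖| := by
        rw [norm_smul, Real.norm_eq_abs, abs_of_nonneg hc]
    _ ≤ ‖c • b - a‖ := abs_norm_sub_norm_le _ _
    _ = ‖a - c • b‖ := norm_sub_rev _ _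

theorem hasFDerivAt_fderiv_sub_smul_fderiv {u v : E → ℝ} {y : E} {K : E →L[ℝ] E →L[ℝ] ℝ} (c : ℝ)
    (hu : ContDiffAt ℝ 2 u y) (hv : ContDiffAt ℝ 2 v y)
    (hku : fderiv ℝ (fderiv ℝ u) y = -‖fderiv ℝ u y‖ • K)
    (hkv : fderiv ℝ (fderiv ℝ v) y = -‖fderiv ℝ v y‖ • K) :
    HasFDerivAt (fun x => fderiv ℝ u x - c • fderiv ℝ v x)
      ((c * ‖fderiv ℝ v y‖ - ‖fderiv ℝ u y‖) • K) y := by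
  have hu' := ((hu.fderiv_right le_rfl).differentiableAt one_ne_zero).hasFDerivAt
  have hv' := ((hv.fderiv_right le_rfl).differentiableAt one_ne_zero).hasFDerivAt
  have h := hu'.sub (hv'.const_smul c)
  rwa [hku, hkv, smul_smul, show -‖fderiv ℝ u y‖ • K - (c * -‖fderiv ℝ v y‖) • K
    = (c * ‖fderiv ℝ v y‖ - ‖fderiv ℝ u y‖) • K by module] at h

theorem Convex.eqOn_zero_of_norm_fderiv_le_mul_norm {s : Set E} (hs : Convex ℝ s) {G : E → F}
    {K : ℝ} (hG : ∀ y ∈ s, DifferentiableAt ℝ G y) (hK : ∀ y ∈ s, ‖fderiv ℝ G y‖ ≤ K * ‖G y‖)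
    {x₀ : E} (hx₀ : x₀ ∈ s) (h0 : G x₀ = 0) : EqOn G 0 s := by
  intro x hx
  set p : ℝ → E := fun t => x₀ + t • (x - x₀)
  have hp : ∀ t ∈ Icc (0 : ℝ) 1, p t ∈ s := fun t ht => hs.add_smul_sub_mem hx₀ hx ht
  have hderiv (t : ℝ) (ht : t ∈ Icc (0 : ℝ) 1) :
      HasDerivAt (G ∘ p) (fderiv ℝ G (p t) (x - x₀)) t := by
    refine (hG _ (hp t ht)).hasFDerivAt.comp_hasDerivAt t ?_
    simpa only [one_smul] using ((hasDerivAt_id' t).smul_const (x - x₀)).const_add x₀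
  have hbound (t : ℝ) (ht : t ∈ Ico (0 : ℝ) 1) :
      ‖fderiv ℝ G (p t) (x - x₀)‖ ≤ K * ‖x - x₀‖ * ‖(G ∘ p) t‖ :=
    calc ‖fderiv ℝ G (p t) (x - x₀)‖ ≤ ‖fderiv ℝ G (p t)‖ * ‖x - x₀‖ :=
          (fderiv ℝ G (p t)).le_opNorm _
      _ ≤ K * ‖G (p t)‖ * ‖x - x₀‖ :=
        mul_le_mul_of_nonneg_right (hK _ (hp t (Ico_subset_Icc_self ht))) (norm_nonneg _)
      _ = K * ‖x - x₀‖ * ‖(G ∘ p) t‖ := by simp only [Function.comp_apply]; ring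
  have hzero := eq_zero_of_abs_deriv_le_mul_abs_self_of_eq_zero_right
    (fun t ht => (hderiv t ht).continuousAt.continuousWithinAt)
    (fun t ht => (hderiv t (Ico_subset_Icc_self ht)).hasDerivWithinAt)
    (by simpa [p] using h0) hbound 1 (right_mem_Icc.2 zero_le_one)
  simpa [p] using hzero

end

theorem IsPreconnected.eqOn_zero_of_eventuallyEq_zero {X Y : Type*} [TopologicalSpace X]
    [TopologicalSpace Y] [Zero Y] [T1Space Y] {s : Set X} {f : X → Y} (hs : IsPreconnected s)
    (hf : ∀ x ∈ s, ContinuousAt f x) (hloc : ∀ x ∈ s, f x = 0 → f =ᶠ[𝓝 x] 0)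
    {x₀ : X} (hx₀ : x₀ ∈ s) (h0 : f x₀ = 0) : EqOn f 0 s := by
  have hclosure {x : X} (hx : x ∈ s) (hxc : x ∈ closure {y | f =ᶠ[𝓝 y] 0}) : f x = 0 := by
    have : f '' {y | f =ᶠ[𝓝 y] 0} ⊆ {0} := by
      rintro _ ⟨y, hy, rfl⟩
      exact hy.eq_of_nhds
    simpa using closure_mono this (mem_closure_image (hf x hx) hxc)
  have hsub : s ⊆ {x | f =ᶠ[𝓝 x] 0} :=
    hs.subset_of_closure_inter_subset isOpen_setOfPred_eventually_nhds
      ⟨x₀, hx₀, hloc x₀ hx₀ h0⟩ fun x ⟨hxc, hx⟩ => hloc x hx (hclosure hx hxc)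
  exact fun x hx => (hsub hx).eq_of_nhds

/-- Propagation of gradient proportionality: if `D²u = -‖Du‖ k` and
`D²v = -‖Dv‖ k` on an open connected set `Ω` with `k` continuous, `c > 0`,
and `Du(x₁) = c Dv(x₁)` at some `x₁ ∈ Ω`, then `Du = c Dv` on all of `Ω`. -/
theorem gradient_proportionality_propagates {n : ℕ}
    (Ω : Set (EuclideanSpace ℝ (Fin n))) (hΩ : IsOpen Ω)
    (hconn : IsConnected Ω)
    (u v : EuclideanSpace ℝ (Fin n) → ℝ)
    (hu : ContDiffOn ℝ 2 u Ω) (hv : ContDiffOn ℝ 2 v Ω)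
    (k : EuclideanSpace ℝ (Fin n) →
      (EuclideanSpace ℝ (Fin n) →L[ℝ] EuclideanSpace ℝ (Fin n) →L[ℝ] ℝ))
    (hk_cont : ContinuousOn k Ω)
    (hku : ∀ x ∈ Ω, fderiv ℝ (fderiv ℝ u) x = -(‖fderiv ℝ u x‖) • k x)
    (hkv : ∀ x ∈ Ω, fderiv ℝ (fderiv ℝ v) x = -(‖fderiv ℝ v x‖) • k x)
    (c : ℝ) (hc : 0 < c) (x₁ : EuclideanSpace ℝ (Fin n)) (hx₁ : x₁ ∈ Ω)
    (hprop : fderiv ℝ u x₁ = c • fderiv ℝ v x₁) :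
    ∀ x ∈ Ω, fderiv ℝ u x = c • fderiv ℝ v x := by
  set G := fun y => fderiv ℝ u y - c • fderiv ℝ v y
  have hGderiv (y) (hy : y ∈ Ω) :
      HasFDerivAt G ((c * ‖fderiv ℝ v y‖ - ‖fderiv ℝ u y‖) • k y) y :=
    hasFDerivAt_fderiv_sub_smul_fderiv c (hu.contDiffAt (hΩ.mem_nhds hy))
      (hv.contDiffAt (hΩ.mem_nhds hy)) (hku y hy) (hkv y hy)
  have hGloc (x₀) (hx₀ : x₀ ∈ Ω) (h0 : G x₀ = 0) : G =ᶠ[𝓝 x₀] 0 := by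
    -- unification does not find the normed-group instance on this `→L` space by itself
    have hk_bdd : ∀ᶠ y in 𝓝 x₀, ‖k y‖ < ‖k x₀‖ + 1 :=
      (ContinuousAt.norm
        (E := EuclideanSpace ℝ (Fin n) →L[ℝ] EuclideanSpace ℝ (Fin n) →L[ℝ] ℝ)
        (hk_cont.continuousAt (hΩ.mem_nhds hx₀))).eventually_lt continuousAt_const (lt_add_one _)
    obtain ⟨ε, hε, hball⟩ := Metric.mem_nhds_iff.1 (inter_mem (hΩ.mem_nhds hx₀) hk_bdd)
    refine eventually_of_mem (ball_mem_nhds x₀ hε)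
      ((convex_ball x₀ ε).eqOn_zero_of_norm_fderiv_le_mul_norm (K := ‖k x₀‖ + 1)
        (fun y hy => (hGderiv y (hball hy).1).differentiableAt) (fun y hy => ?_)
        (mem_ball_self hε) h0)
    obtain ⟨hyΩ, hky⟩ := hball hy
    calc ‖fderiv ℝ G y‖ = ‖(c * ‖fderiv ℝ v y‖ - ‖fderiv ℝ u y‖) • k y‖ := by
          rw [(hGderiv y hyΩ).fderiv]
      _ ≤ ‖G y‖ * ‖k y‖ := norm_smul_sub_norm_smul_le hc.le (fderiv ℝ u y) (fderiv ℝ v y) (k y)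
      _ ≤ (‖k x₀‖ + 1) * ‖G y‖ := by rw [mul_comm]; gcongr; exact hky.le
  intro x hx
  exact sub_eq_zero.1 (hconn.isPreconnected.eqOn_zero_of_eventuallyEq_zero
    (fun y hy => (hGderiv y hy).continuousAt) hGloc hx₁ (sub_eq_zero.2 hprop) hx)
end
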